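/- Fix ζ, n, γ > 0 and α ≥ 1. Let δ* > 0 solve (ζ/√n)·δ^{1−1/(2α)} + 2ζδγ = δ². If γ ≤ ζ^{−1/(1+2α)} · n^{−α/(1+2α)}, then (δ*)² ≤ C·(ζ²/n)^{2α/(1+2α)} for an absolute constant C. -/

import Mathlib

/-- Critical-equation bound for `α`-Hölder smooth nonparametric regression with
mixture data. -/
theorem critical_eq_holder :
    ∃ C : ℝ, 0 < C ∧ ∀ ζ n γ α δ : ℝ, 0 < ζ → 0 < n → 0 < γ → 1 ≤ α → 0 < δ →
      (ζ / Real.sqrt n) * δ ^ (1 - 1 / (2 * α)) + 2 * ζ * δ * γ = δ ^ (2 : ℝ) →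
      γ ≤ ζ ^ (-(1 / (1 + 2 * α))) * n ^ (-(α / (1 + 2 * α))) →
      δ ^ (2 : ℝ) ≤ C * (ζ ^ (2 : ℝ) / n) ^ (2 * α / (1 + 2 * α)) := by
  refine ⟨16, by norm_num, ?_⟩
  intro ζ n γ α δ hζ hn hγ hα hδ heq hγle
  have hα0 : (0:ℝ) < α := lt_of_lt_of_le one_pos hα
  have hp : (0:ℝ) < 1 + 2 * α := by linarith
  set q : ℝ := 2 * α / (1 + 2 * α) with hq
  have hq0 : 0 < q := by positivity
  have hq1 : q ≤ 1 := by rw [hq, div_le_one hp]; linarith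
  have hx : (0:ℝ) < ζ ^ (2:ℝ) / n := by positivity
  have hxq : (0:ℝ) < (ζ ^ (2:ℝ) / n) ^ q := Real.rpow_pos_of_pos hx q
  set A : ℝ := ζ / Real.sqrt n with hA
  have hA0 : 0 < A := by
    have : 0 < Real.sqrt n := Real.sqrt_pos.mpr hn
    positivity
  set e : ℝ := 1 - 1 / (2 * α) with he
  have hterm1 : 0 < A * δ ^ e := by positivity
  have hterm2 : 0 < 2 * ζ * δ * γ := by positivity
  rcases le_or_gt (δ ^ (2:ℝ)) (2 * (A * δ ^ e)) with h1 | h1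
  · -- Case 1 : δ^2 ≤ 2 A δ^e, so δ^(2-e) ≤ 2A and δ ≤ (2A)^q
    have hδe : 0 < δ ^ e := Real.rpow_pos_of_pos hδ e
    have h2 : δ ^ (2 - e) ≤ 2 * A := by
      rw [← mul_le_mul_iff_left₀ hδe]
      calc δ ^ (2 - e) * δ ^ e = δ ^ (2:ℝ) := by
            rw [← Real.rpow_add hδ]; ring_nf
        _ ≤ 2 * (A * δ ^ e) := h1
        _ = 2 * A * δ ^ e := by ring
    have hexp : (2 - e) * q = 1 := by
      rw [he, hq]; field_simp; ring
    have hδle : δ ≤ (2 * A) ^ q := by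
      have h3 : (δ ^ (2 - e)) ^ q ≤ (2 * A) ^ q :=
        Real.rpow_le_rpow (Real.rpow_pos_of_pos hδ _).le h2 hq0.le
      rwa [← Real.rpow_mul hδ.le, hexp, Real.rpow_one] at h3
    have h4 : δ ^ (2:ℝ) ≤ ((2 * A) ^ q) ^ (2:ℝ) :=
      Real.rpow_le_rpow hδ.le hδle (by norm_num)
    have h5 : ((2 * A) ^ q) ^ (2:ℝ) = (4 * (ζ ^ (2:ℝ) / n)) ^ q := by
      rw [← Real.rpow_mul (by positivity), mul_comm q 2, Real.rpow_mul (by positivity)]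
      congr 1
      rw [Real.rpow_two, Real.rpow_two, mul_pow, div_pow, Real.sq_sqrt hn.le]
      ring
    have h6 : (4 * (ζ ^ (2:ℝ) / n)) ^ q ≤ 4 * (ζ ^ (2:ℝ) / n) ^ q := by
      rw [Real.mul_rpow (by norm_num) hx.le]
      have h7 : (4:ℝ) ^ q ≤ 4 ^ (1:ℝ) :=
        Real.rpow_le_rpow_of_exponent_le (by norm_num) hq1
      rw [Real.rpow_one] at h7
      exact mul_le_mul_of_nonneg_right h7 hxq.le
    calc δ ^ (2:ℝ) ≤ 4 * (ζ ^ (2:ℝ) / n) ^ q := by linarith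
      _ ≤ 16 * (ζ ^ (2:ℝ) / n) ^ q := by nlinarith
  · -- Case 2 : δ^2 < 4 ζ δ γ, so δ ≤ 4 ζ γ
    have h2 : δ * δ < 2 * (2 * ζ * δ * γ) := by
      rw [← sq, ← Real.rpow_two]; linarith
    have h3 : δ * δ < 4 * (ζ * γ) * δ := by
      calc δ * δ < 2 * (2 * ζ * δ * γ) := h2
        _ = 4 * (ζ * γ) * δ := by ring
    have hδle : δ ≤ 4 * (ζ * γ) := ((mul_lt_mul_iff_left₀ hδ).mp h3).le
    have hB : ζ * γ ≤ ζ ^ q * n ^ (-(α / (1 + 2 * α))) := by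
      calc ζ * γ ≤ ζ * (ζ ^ (-(1 / (1 + 2 * α))) * n ^ (-(α / (1 + 2 * α)))) :=
            mul_le_mul_of_nonneg_left hγle hζ.le
        _ = ζ ^ (1 + -(1 / (1 + 2 * α))) * n ^ (-(α / (1 + 2 * α))) := by
            rw [Real.rpow_add hζ, Real.rpow_one]; ring
        _ = ζ ^ q * n ^ (-(α / (1 + 2 * α))) := by
            rw [show (1 + -(1 / (1 + 2 * α))) = q from by rw [hq]; field_simp; ring]
    have hsq : (ζ * γ) ^ (2:ℝ) ≤ (ζ ^ (2:ℝ) / n) ^ q := by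
      have h5 : (ζ * γ) ^ (2:ℝ) ≤ (ζ ^ q * n ^ (-(α / (1 + 2 * α)))) ^ (2:ℝ) :=
        Real.rpow_le_rpow (by positivity) hB (by norm_num)
      refine h5.trans_eq ?_
      rw [Real.mul_rpow (by positivity) (by positivity),
        ← Real.rpow_mul hζ.le, ← Real.rpow_mul hn.le,
        Real.div_rpow (by positivity) hn.le, ← Real.rpow_mul hζ.le]
      rw [show -(α / (1 + 2 * α)) * 2 = -q from by rw [hq]; ring,
        Real.rpow_neg hn.le, div_eq_mul_inv]
      congr 1
      congr 1
      rw [hq]; ring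
    have h4 : δ ^ (2:ℝ) ≤ (4 * (ζ * γ)) ^ (2:ℝ) :=
      Real.rpow_le_rpow hδ.le hδle (by norm_num)
    have h6 : (4 * (ζ * γ)) ^ (2:ℝ) = 16 * (ζ * γ) ^ (2:ℝ) := by
      rw [Real.rpow_two, Real.rpow_two, mul_pow]; norm_num
    calc δ ^ (2:ℝ) ≤ 16 * (ζ * γ) ^ (2:ℝ) := by rw [← h6]; exact h4
      _ ≤ 16 * (ζ ^ (2:ℝ) / n) ^ q := by linarith
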